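/- Let X be a set and σ, τ: X → X commuting permutations. Then r(x,y) = (σ(y), τ(x)) defines a set-theoretic solution to the Yang–Baxter equation, and every map k: X → X commuting with στ is a reflection of (X,r). -/
import Mathlib


/-- `r × id` acting on triples. -/
def r1map {X : Type*} (r : X × X → X × X) : X × X × X → X × X × X :=
  fun p => ((r (p.1, p.2.1)).1, (r (p.1, p.2.1)).2, p.2.2)

/-- `id × r` acting on triples. -/
def r2map {X : Type*} (r : X × X → X × X) : X × X × X → X × X × X :=
  fun p => (p.1, r p.2)

/-- `id × k` on pairs. -/
def k2map {X : Type*} (k : X → X) : X × X → X × X := fun p => (p.1, k p.2)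

/-- `k × id` on pairs. -/
def k1map {X : Type*} (k : X → X) : X × X → X × X := fun p => (k p.1, p.2)

/-- Example: for commuting permutations σ, τ, r(x,y) = (σ(y), τ(x)) is a
solution to the YBE, and each map k commuting with στ is a reflection. -/
theorem statement4 {X : Type*} (σ τ : X ≃ X)
    (hcomm : ∀ x : X, σ (τ x) = τ (σ x))
    (r : X × X → X × X) (hr : ∀ x y : X, r (x, y) = (σ y, τ x)) :
    (r1map r ∘ r2map r ∘ r1map r = r2map r ∘ r1map r ∘ r2map r) ∧
      ∀ k : X → X, (∀ x : X, k (σ (τ x)) = σ (τ (k x))) →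
        r ∘ k2map k ∘ r ∘ k2map k = k2map k ∘ r ∘ k2map k ∘ r := by
  constructor
  · funext ⟨x, y, z⟩
    simp [r1map, r2map, hr, hcomm]
  · intro k hk
    funext ⟨x, y⟩
    simp only [Function.comp_apply, k2map, hr]
    simp only [Prod.mk.injEq]
    refine ⟨trivial, ?_⟩
    rw [← hcomm, ← hk, hcomm]
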